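/- Let n ≥ 2 and let A_n denote the alternating group of even permutations of Fin n, acting on vectors v : Fin n → ℝ by (σ·v) i = v (σ⁻¹ i). Let s = Equiv.swap j k be the transposition of two distinct indices j ≠ k of Fin n (a reflection r_α of the Weyl group W(A_{n-1}) in orthogonal coordinates). Then for all λ, x : Fin n → ℝ, the normalized E-orbit functions satisfy Ê_{s·λ}(x) = Ê_λ(s·x). -/
import Mathlib

/-- The action of a permutation on vectors: `(σ · v) i = v (σ⁻¹ i)`. -/
def permAct {n : ℕ} (σ : Equiv.Perm (Fin n)) (v : Fin n → ℝ) : Fin n → ℝ :=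
  fun i => v (σ⁻¹ i)

/-- The normalized `E`-orbit function
`Ê_λ(x) = ∑_{σ ∈ Aₙ} exp(2πi ∑ᵢ λ(σ⁻¹ i) · x i)`. -/
noncomputable def Ehat (n : ℕ) (lam x : Fin n → ℝ) : ℂ :=
  ∑ σ : alternatingGroup (Fin n),
    Complex.exp (2 * (Real.pi : ℂ) * Complex.I *
      ((∑ i, lam ((σ : Equiv.Perm (Fin n))⁻¹ i) * x i : ℝ) : ℂ))

/-- For a transposition `s = swap j k` (a reflection `r_α` of the Weyl group
`W(A_{n-1})` in orthogonal coordinates), `Ê_{s·λ}(x) = Ê_λ(s·x)`. -/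
theorem Ehat_swap (n : ℕ) (hn : 2 ≤ n) (j k : Fin n) (hjk : j ≠ k) (lam x : Fin n → ℝ) :
    Ehat n (permAct (Equiv.swap j k) lam) x = Ehat n lam (permAct (Equiv.swap j k) x) := by
  set s := Equiv.swap j k with hs
  have hmem : ∀ σ : alternatingGroup (Fin n), s * (σ : Equiv.Perm (Fin n)) * s ∈
      alternatingGroup (Fin n) := by
    intro σ
    have hσ : Equiv.Perm.sign (σ : Equiv.Perm (Fin n)) = 1 :=
      Equiv.Perm.mem_alternatingGroup.mp σ.2
    simp [Equiv.Perm.mem_alternatingGroup, hσ, mul_comm]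
  have hss : s * s = 1 := by
    rw [hs]; ext i; simp [Equiv.swap_apply_self]
  let e : alternatingGroup (Fin n) ≃ alternatingGroup (Fin n) :=
    { toFun := fun σ => ⟨s * σ * s, hmem σ⟩
      invFun := fun σ => ⟨s * σ * s, hmem σ⟩
      left_inv := fun σ => by
        ext : 1
        calc s * (s * ↑σ * s) * s = (s * s) * ↑σ * (s * s) := by group
          _ = ↑σ := by rw [hss]; group
      right_inv := fun σ => by
        ext : 1
        calc s * (s * ↑σ * s) * s = (s * s) * ↑σ * (s * s) := by group
          _ = ↑σ := by rw [hss]; group }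
  unfold Ehat
  refine Fintype.sum_equiv e _ _ ?_
  intro σ
  congr 2
  push_cast
  have hinner : ∀ i, permAct s lam ((σ : Equiv.Perm (Fin n))⁻¹ i) =
      lam (s ((σ : Equiv.Perm (Fin n))⁻¹ i)) := by
    intro i
    simp [permAct, hs, Equiv.swap_inv]
  rw [show ((e σ : Equiv.Perm (Fin n)))⁻¹ = s⁻¹ * (σ : Equiv.Perm (Fin n))⁻¹ * s⁻¹ by
    simp [e]; group]
  have hsi : s⁻¹ = s := by rw [hs, Equiv.swap_inv]
  rw [hsi]
  refine Fintype.sum_equiv s (fun i => (permAct s lam ((σ : Equiv.Perm (Fin n))⁻¹ i) * x i : ℂ))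
    (fun i => (lam ((s * (σ : Equiv.Perm (Fin n))⁻¹ * s) i) * permAct s x i : ℂ)) ?_
  intro i
  simp [permAct, hs, Equiv.swap_inv, Equiv.swap_apply_self, Equiv.Perm.mul_apply]
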